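/- arXiv:1206.5739 — 2 statements merged into one kernel-verified Lean document; each statement's English description precedes it below -/
import Mathlib

section
/- Let a ∈ ℝ, b ∈ ℂ^n, C ∈ ℂ^{n×n} Hermitian, and let X = [[a, -b*], [b, C]], H = diag(-1, I_n), and Q(z) = a − z + b*(C − z)^{-1} b. Then for every z ∈ ℂ with Im z ≠ 0 at which Q(z) ≠ 0 and z is not an eigenvalue of X: −1/Q(z) = e* H (X − z)^{-1} e, where e is the first standard basis vector of ℂ^{n+1}. -/
/-!
Write `M = X - z` in block form with bottom-right block `D = C - z`. Since `C` is Hermitian and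
`z` is not real, `D` is invertible, and the Schur complement of `D` in `M` is the `1 × 1` matrix
`Q(z)`. The top-left entry of `M⁻¹` is the inverse of that Schur complement, i.e. `1 / Q(z)`, and
`H` only flips the sign of the first row, so `e* H M⁻¹ e = -1 / Q(z)`.
-/

open Matrix

theorem Matrix.IsHermitian.isUnit_det_sub_smul_one {𝕜 n : Type*} [RCLike 𝕜] [Fintype n]
    [DecidableEq n] {A : Matrix n n 𝕜} (hA : A.IsHermitian) {z : 𝕜} (hz : RCLike.im z ≠ 0) :
    IsUnit (A - z • 1).det := by
  have hz' : z ∉ spectrum 𝕜 A := by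
    rw [hA.spectrum_eq_image_range]
    rintro ⟨_, -, rfl⟩
    exact hz (RCLike.ofReal_im _)
  rw [spectrum.mem_iff, not_not, Algebra.algebraMap_eq_smul_one] at hz'
  rw [← isUnit_iff_isUnit_det, ← neg_sub]
  exact hz'.neg

theorem Matrix.toBlocks₁₁_inv_fromBlocks {α l m : Type*} [Field α] [Fintype l] [Fintype m]
    [DecidableEq l] [DecidableEq m] (A : Matrix l l α) (B : Matrix l m α) (C : Matrix m l α)
    (D : Matrix m m α) (hD : IsUnit D.det) (hS : IsUnit (A - B * D⁻¹ * C).det) :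
    (fromBlocks A B C D)⁻¹.toBlocks₁₁ = (A - B * D⁻¹ * C)⁻¹ := by
  let := D.invertibleOfIsUnitDet hD
  let : Invertible (A - B * ⅟D * C) := by
    rw [invOf_eq_nonsing_inv]; exact invertibleOfIsUnitDet _ hS
  let := fromBlocks₂₂Invertible A B C D
  rw [← invOf_eq_nonsing_inv, invOf_fromBlocks₂₂_eq, toBlocks_fromBlocks₁₁, invOf_eq_nonsing_inv,
    invOf_eq_nonsing_inv]

theorem Matrix.inv_fromBlocks_apply_inl_inl {α m : Type*} [Field α] [Fintype m] [DecidableEq m]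
    (a : α) (u v : m → α) (D : Matrix m m α) (hD : IsUnit D.det) (hS : a - u ⬝ᵥ D⁻¹ *ᵥ v ≠ 0) :
    (fromBlocks (of fun _ _ => a) (of fun (_ : Unit) j => u j) (of fun i (_ : Unit) => v i) D)⁻¹
      (.inl ()) (.inl ()) = (a - u ⬝ᵥ D⁻¹ *ᵥ v)⁻¹ := by
  have hSchur : (of fun _ _ => a) - (of fun (_ : Unit) j => u j) * D⁻¹ *
      (of fun i (_ : Unit) => v i) = of fun _ _ => a - u ⬝ᵥ D⁻¹ *ᵥ v := by
    ext
    simp only [sub_apply, of_apply, mul_apply, dotProduct, mulVec, Finset.mul_sum,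
      Finset.sum_mul, mul_assoc]
    rw [Finset.sum_comm]
  have hSchur_unit : IsUnit ((of fun _ _ => a) - (of fun (_ : Unit) j => u j) * D⁻¹ *
      (of fun i (_ : Unit) => v i)).det := by
    rw [hSchur, det_unique]
    exact hS.isUnit
  exact (congrFun₂ (toBlocks₁₁_inv_fromBlocks _ _ _ D hD hSchur_unit) () ()).trans
    (by simp [hSchur])

theorem stmt_5_general (n : ℕ) (a : ℝ) (b : Fin n → ℂ) (C : Matrix (Fin n) (Fin n) ℂ)
    (hC : C.IsHermitian)
    (X : Matrix (Unit ⊕ Fin n) (Unit ⊕ Fin n) ℂ)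
    (hX : X = Matrix.fromBlocks (Matrix.of fun _ _ => (a : ℂ))
        (Matrix.of fun _ j => -(starRingEnd ℂ) (b j)) (Matrix.of fun i _ => b i) C)
    (H : Matrix (Unit ⊕ Fin n) (Unit ⊕ Fin n) ℂ)
    (hH : H = Matrix.fromBlocks (-1) 0 0 (1 : Matrix (Fin n) (Fin n) ℂ))
    (e : Unit ⊕ Fin n → ℂ) (he : e = Pi.single (Sum.inl ()) 1)
    (z : ℂ) (hz : z.im ≠ 0)
    (hQ : (a : ℂ) - z + dotProduct (star b)
        ((C - z • (1 : Matrix (Fin n) (Fin n) ℂ))⁻¹.mulVec b) ≠ 0) :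
    -1 / ((a : ℂ) - z + dotProduct (star b)
        ((C - z • (1 : Matrix (Fin n) (Fin n) ℂ))⁻¹.mulVec b)) =
      dotProduct (star e)
        ((H * (X - z • (1 : Matrix (Unit ⊕ Fin n) (Unit ⊕ Fin n) ℂ))⁻¹).mulVec e) := by
  have hshift : X - z • 1 = fromBlocks (of fun _ _ => (a : ℂ) - z)
      (of fun _ j => (-star b) j) (of fun i _ => b i) (C - z • 1) := by
    rw [hX, ← fromBlocks_one, fromBlocks_smul, sub_eq_add_neg, fromBlocks_neg, fromBlocks_add]
    congr
    · ext; simp [sub_eq_add_neg]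
    · simp
    · simp
  have hSchur : (a : ℂ) - z - (-star b) ⬝ᵥ (C - z • 1)⁻¹ *ᵥ b ≠ 0 := by
    rwa [neg_dotProduct, sub_neg_eq_add]
  have hcorner := inv_fromBlocks_apply_inl_inl _ _ _ _ (hC.isUnit_det_sub_smul_one hz) hSchur
  rw [neg_dotProduct, sub_neg_eq_add] at hcorner
  subst hH he
  rw [Pi.star_single, star_one, mulVec_single_one, single_one_dotProduct, col_apply, hshift,
    ← fromBlocks_toBlocks (fromBlocks _ _ _ _)⁻¹, fromBlocks_multiply, fromBlocks_apply₁₁]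
  simp only [Matrix.neg_mul, Matrix.one_mul, Matrix.zero_mul, add_zero, neg_div, one_div]
  exact congrArg Neg.neg hcorner.symm

/-- Schur complement formula: `-1/Q(z) = e* H (X - z)⁻¹ e` for the H-selfadjoint block matrix
`X = [[a, -b*],[b, C]]`, `H = diag(-1, I_n)`, `Q(z) = a - z + b*(C - z)⁻¹ b`. -/
theorem stmt_5 (n : ℕ) (a : ℝ) (b : Fin n → ℂ) (C : Matrix (Fin n) (Fin n) ℂ)
    (hC : C.IsHermitian)
    (X : Matrix (Unit ⊕ Fin n) (Unit ⊕ Fin n) ℂ)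
    (hX : X = Matrix.fromBlocks (Matrix.of fun _ _ => (a : ℂ))
        (Matrix.of fun _ j => -(starRingEnd ℂ) (b j)) (Matrix.of fun i _ => b i) C)
    (H : Matrix (Unit ⊕ Fin n) (Unit ⊕ Fin n) ℂ)
    (hH : H = Matrix.fromBlocks (-1) 0 0 (1 : Matrix (Fin n) (Fin n) ℂ))
    (e : Unit ⊕ Fin n → ℂ) (he : e = Pi.single (Sum.inl ()) 1)
    (z : ℂ) (hz : z.im ≠ 0)
    (hQ : (a : ℂ) - z + dotProduct (star b)
        ((C - z • (1 : Matrix (Fin n) (Fin n) ℂ))⁻¹.mulVec b) ≠ 0)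
    (hev : (X - z • (1 : Matrix (Unit ⊕ Fin n) (Unit ⊕ Fin n) ℂ)).det ≠ 0) :
    -1 / ((a : ℂ) - z + dotProduct (star b)
        ((C - z • (1 : Matrix (Fin n) (Fin n) ℂ))⁻¹.mulVec b)) =
      dotProduct (star e)
        ((H * (X - z • (1 : Matrix (Unit ⊕ Fin n) (Unit ⊕ Fin n) ℂ))⁻¹).mulVec e) :=
  stmt_5_general n a b C hC X hX H hH e he z hz hQ
end

section
/- Let Q(z) = a − z + μ̂(z) where a ∈ ℝ and μ is a finite positive Borel measure on ℝ, and suppose z_0 ∈ ℂ⁺ satisfies Q(z_0) = 0. Then z̄_0 satisfies Q(z̄_0) = 0 as well, where Q is extended to the lower half-plane by Q(z̄) = conj(Q(z)). Moreover there is at most one zero of Q in the open upper half-plane, counted with multiplicity, and if such a zero exists it is simple. -/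
/-!
Taking imaginary parts, a zero `z` of `Q` off the real axis satisfies `∫ |t - z|⁻² dμ = 1`.
If `z` and `w` are two distinct zeros, the resolvent identity turns `Q z - Q w = 0` into
`∫ (t - z)⁻¹ (t - w)⁻¹ dμ = 1`, and if `z = w` is a multiple zero, `Q' z = 0` says the same.
For `z`, `w` in the upper half-plane this is impossible: expanding
`|(t - z)⁻¹ - conj (t - w)⁻¹|²` shows that this everywhere positive function has integral
`1 + 1 - 2 = 0`, which forces `μ = 0`.
-/

open MeasureTheory Complex ComplexConjugate

section CauchyKernel

variable {z w : ℂ}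

lemma ofReal_sub_ne_zero (hz : z.im ≠ 0) (t : ℝ) : (t : ℂ) - z ≠ 0 := fun h => hz <| by
  simpa using congrArg Complex.im h

lemma norm_inv_ofReal_sub_le (hz : z.im ≠ 0) (t : ℝ) : ‖((t : ℂ) - z)⁻¹‖ ≤ |z.im|⁻¹ := by
  rw [norm_inv]
  exact inv_anti₀ (abs_pos.2 hz) (by simpa using abs_im_le_norm ((t : ℂ) - z))

lemma continuous_inv_ofReal_sub (hz : z.im ≠ 0) : Continuous fun t : ℝ => ((t : ℂ) - z)⁻¹ :=
  (continuous_ofReal.sub continuous_const).inv₀ (ofReal_sub_ne_zero hz)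

lemma inv_ofReal_sub_ne_conj (hz : 0 < z.im) (hw : 0 < w.im) (t : ℝ) :
    ((t : ℂ) - z)⁻¹ ≠ conj ((t : ℂ) - w)⁻¹ := by
  intro h
  have := congrArg Complex.im (inv_injective (h.trans (map_inv₀ _ _)))
  simp only [conj_im, sub_im, ofReal_im, zero_sub, neg_neg] at this
  linarith

variable (μ : Measure ℝ) [IsFiniteMeasure μ]

lemma integrable_inv_ofReal_sub (hz : z.im ≠ 0) :
    Integrable (fun t : ℝ => ((t : ℂ) - z)⁻¹) μ :=
  .of_bound (continuous_inv_ofReal_sub hz).aestronglyMeasurable _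
    (.of_forall (norm_inv_ofReal_sub_le hz))

lemma integrable_inv_ofReal_sub_mul (hz : z.im ≠ 0) (hw : w.im ≠ 0) :
    Integrable (fun t : ℝ => ((t : ℂ) - z)⁻¹ * ((t : ℂ) - w)⁻¹) μ :=
  (integrable_inv_ofReal_sub μ hw).bdd_mul (continuous_inv_ofReal_sub hz).aestronglyMeasurable
    (.of_forall (norm_inv_ofReal_sub_le hz))

lemma integrable_normSq_inv_ofReal_sub (hz : z.im ≠ 0) :
    Integrable (fun t : ℝ => normSq ((t : ℂ) - z)⁻¹) μ := by
  refine .of_bound ((continuous_normSq.comp (continuous_inv_ofReal_sub hz)).aestronglyMeasurable)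
    (|z.im|⁻¹ ^ 2) (.of_forall fun t => ?_)
  rw [Real.norm_of_nonneg (normSq_nonneg _), normSq_eq_norm_sq]
  exact pow_le_pow_left₀ (norm_nonneg _) (norm_inv_ofReal_sub_le hz t) 2

end CauchyKernel

lemma integral_mul_ne_one_of_integral_normSq_eq_one {α : Type*} [MeasurableSpace α]
    {μ : Measure α} {u v : α → ℂ} (hu : Integrable (fun x => normSq (u x)) μ)
    (hv : Integrable (fun x => normSq (v x)) μ) (huv : Integrable (fun x => u x * v x) μ)
    (hu1 : ∫ x, normSq (u x) ∂μ = 1) (hv1 : ∫ x, normSq (v x) ∂μ = 1)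
    (hne : ∀ x, u x ≠ conj (v x)) : ∫ x, u x * v x ∂μ ≠ 1 := by
  intro huv1
  have hexpand : ∀ x,
      normSq (u x - conj (v x)) = normSq (u x) + normSq (v x) - 2 * (u x * v x).re := fun x => by
    rw [normSq_sub, normSq_conj, conj_conj]
  have hsum : Integrable (fun x => normSq (u x) + normSq (v x)) μ := hu.add hv
  have hre : Integrable (fun x => 2 * (u x * v x).re) μ := huv.re.const_mul 2
  have hint : Integrable (fun x => normSq (u x - conj (v x))) μ := by
    simp only [hexpand]
    exact hsum.sub hre
  have hre1 : ∫ x, (u x * v x).re ∂μ = 1 := (integral_re huv).trans (congrArg re huv1)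
  have hzero : ∫ x, normSq (u x - conj (v x)) ∂μ = 0 := by
    simp only [hexpand]
    rw [integral_sub hsum hre, integral_add hu hv, integral_const_mul, hu1, hv1, hre1]
    norm_num
  have hsupp : Function.support (fun x => normSq (u x - conj (v x))) = Set.univ :=
    Function.support_eq_univ fun x => (normSq_pos.2 (sub_ne_zero.2 (hne x))).ne'
  have hμ : μ = 0 := by
    have := (integral_pos_iff_support_of_nonneg (fun x => normSq_nonneg _) hint).not.1
      hzero.not_gt
    rwa [hsupp, not_lt, nonpos_iff_eq_zero, Measure.measure_univ_eq_zero] at this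
  simp [hμ] at hu1

noncomputable def cauchyTransform (μ : Measure ℝ) (z : ℂ) : ℂ := ∫ t : ℝ, ((t : ℂ) - z)⁻¹ ∂μ

lemma cauchyTransform_conj (μ : Measure ℝ) (z : ℂ) :
    cauchyTransform μ (conj z) = conj (cauchyTransform μ z) := by
  simp only [cauchyTransform, ← integral_conj, map_inv₀, map_sub, conj_ofReal]

section CauchyTransform

variable (μ : Measure ℝ) [IsFiniteMeasure μ] {z w : ℂ}

lemma im_cauchyTransform (hz : z.im ≠ 0) :
    (cauchyTransform μ z).im = z.im * ∫ t : ℝ, normSq ((t : ℂ) - z)⁻¹ ∂μ := by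
  rw [cauchyTransform, ← integral_const_mul]
  refine (integral_im (integrable_inv_ofReal_sub μ hz)).symm.trans (integral_congr_ae ?_)
  refine .of_forall fun t => ?_
  simp [map_inv₀, div_eq_mul_inv]

lemma cauchyTransform_sub_cauchyTransform (hz : z.im ≠ 0) (hw : w.im ≠ 0) :
    cauchyTransform μ z - cauchyTransform μ w =
      (z - w) * ∫ t : ℝ, ((t : ℂ) - z)⁻¹ * ((t : ℂ) - w)⁻¹ ∂μ := by
  rw [cauchyTransform, cauchyTransform, ← integral_sub (integrable_inv_ofReal_sub μ hz)
    (integrable_inv_ofReal_sub μ hw), ← integral_const_mul]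
  refine integral_congr_ae (.of_forall fun t => ?_)
  have := ofReal_sub_ne_zero hz t
  have := ofReal_sub_ne_zero hw t
  field_simp
  ring

lemma hasDerivAt_cauchyTransform (hz : z.im ≠ 0) :
    HasDerivAt (cauchyTransform μ) (∫ t : ℝ, ((t : ℂ) - z)⁻¹ * ((t : ℂ) - z)⁻¹ ∂μ) z := by
  set ε := |z.im| / 2
  have hε : 0 < ε := by positivity
  have him : ∀ w ∈ Metric.ball z ε, ε ≤ |w.im| := fun w hw => by
    have := (abs_sub_abs_le_abs_sub z.im w.im).trans
      ((abs_im_le_norm (z - w)).trans_eq (by simp)) |>.trans_lt (mem_ball_iff_norm'.1 hw)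
    simp only [ε] at *
    linarith
  have hw0 : ∀ w ∈ Metric.ball z ε, w.im ≠ 0 := fun w hw =>
    abs_pos.1 (hε.trans_le (him w hw))
  refine (hasDerivAt_integral_of_dominated_loc_of_deriv_le (bound := fun _ => (ε ^ 2)⁻¹)
    (F := fun w (t : ℝ) => ((t : ℂ) - w)⁻¹)
    (F' := fun w (t : ℝ) => ((t : ℂ) - w)⁻¹ * ((t : ℂ) - w)⁻¹)
    (Metric.ball_mem_nhds z hε) ?_ (integrable_inv_ofReal_sub μ hz)
    (integrable_inv_ofReal_sub_mul μ hz hz).aestronglyMeasurable ?_ (integrable_const _) ?_).2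
  · filter_upwards [Metric.ball_mem_nhds z hε] with w hw
    exact (continuous_inv_ofReal_sub (hw0 w hw)).aestronglyMeasurable
  · refine .of_forall fun t w hw => ?_
    rw [norm_mul, ← sq, ← inv_pow]
    gcongr
    exact (norm_inv_ofReal_sub_le (hw0 w hw) t).trans (inv_anti₀ hε (him w hw))
  · refine .of_forall fun t w hw => ?_
    have hne := ofReal_sub_ne_zero (hw0 w hw) t
    have hsub : HasDerivAt (fun x => (t : ℂ) - x) (-1) w := by
      simpa using (hasDerivAt_id w).const_sub (t : ℂ)
    exact (hsub.inv hne).congr_deriv (by rw [neg_neg, one_div, sq, mul_inv])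

end CauchyTransform

section ZerosInUpperHalfPlane

variable {a : ℝ} {μ : Measure ℝ} [IsFiniteMeasure μ] {z w : ℂ}

lemma integral_normSq_inv_ofReal_sub_eq_one (hz : z.im ≠ 0)
    (hQz : (a : ℂ) - z + cauchyTransform μ z = 0) :
    ∫ t : ℝ, normSq ((t : ℂ) - z)⁻¹ ∂μ = 1 := by
  have him := congrArg im hQz
  rw [add_im, sub_im, ofReal_im, im_cauchyTransform μ hz, zero_im] at him
  exact mul_left_cancel₀ hz (by linarith)

lemma integral_inv_ofReal_sub_mul_eq_one (hz : z.im ≠ 0) (hw : w.im ≠ 0) (hzw : z ≠ w)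
    (hQz : (a : ℂ) - z + cauchyTransform μ z = 0) (hQw : (a : ℂ) - w + cauchyTransform μ w = 0) :
    ∫ t : ℝ, ((t : ℂ) - z)⁻¹ * ((t : ℂ) - w)⁻¹ ∂μ = 1 := by
  refine mul_left_cancel₀ (sub_ne_zero.2 hzw) ?_
  rw [← cauchyTransform_sub_cauchyTransform μ hz hw]
  linear_combination hQz - hQw

lemma integral_inv_ofReal_sub_mul_ne_one (hz : 0 < z.im) (hw : 0 < w.im)
    (hQz : (a : ℂ) - z + cauchyTransform μ z = 0) (hQw : (a : ℂ) - w + cauchyTransform μ w = 0) :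
    ∫ t : ℝ, ((t : ℂ) - z)⁻¹ * ((t : ℂ) - w)⁻¹ ∂μ ≠ 1 :=
  integral_mul_ne_one_of_integral_normSq_eq_one (integrable_normSq_inv_ofReal_sub μ hz.ne')
    (integrable_normSq_inv_ofReal_sub μ hw.ne') (integrable_inv_ofReal_sub_mul μ hz.ne' hw.ne')
    (integral_normSq_inv_ofReal_sub_eq_one hz.ne' hQz)
    (integral_normSq_inv_ofReal_sub_eq_one hw.ne' hQw) (inv_ofReal_sub_ne_conj hz hw)

end ZerosInUpperHalfPlane

/-- If `Q(z) = a - z + μ̂(z)` has a zero `z₀` in the open upper half-plane, then `conj z₀` is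
also a zero, `z₀` is the only zero in the open upper half-plane, and it is simple. -/
theorem stmt_15 (a : ℝ) (μ : Measure ℝ) [IsFiniteMeasure μ]
    (z₀ : ℂ) (hz₀ : 0 < z₀.im)
    (hzero : (a : ℂ) - z₀ + ∫ t : ℝ, ((t : ℂ) - z₀)⁻¹ ∂μ = 0) :
    ((a : ℂ) - (starRingEnd ℂ) z₀ +
        ∫ t : ℝ, ((t : ℂ) - (starRingEnd ℂ) z₀)⁻¹ ∂μ = 0) ∧
    (∀ z : ℂ, 0 < z.im → (a : ℂ) - z + (∫ t : ℝ, ((t : ℂ) - z)⁻¹ ∂μ) = 0 → z = z₀) ∧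
    deriv (fun z : ℂ => (a : ℂ) - z + ∫ t : ℝ, ((t : ℂ) - z)⁻¹ ∂μ) z₀ ≠ 0 := by
  have hQ₀ : (a : ℂ) - z₀ + cauchyTransform μ z₀ = 0 := hzero
  refine ⟨?_, fun z hz hQz => ?_, ?_⟩
  · change (a : ℂ) - conj z₀ + cauchyTransform μ (conj z₀) = 0
    rw [cauchyTransform_conj, ← conj_ofReal, ← map_sub, ← map_add, hQ₀, map_zero]
  · by_contra hne
    exact integral_inv_ofReal_sub_mul_ne_one hz hz₀ hQz hQ₀
      (integral_inv_ofReal_sub_mul_eq_one hz.ne' hz₀.ne' hne hQz hQ₀)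
  · have hQ' : HasDerivAt (fun z : ℂ => (a : ℂ) - z + ∫ t : ℝ, ((t : ℂ) - z)⁻¹ ∂μ)
        (-1 + ∫ t : ℝ, ((t : ℂ) - z₀)⁻¹ * ((t : ℂ) - z₀)⁻¹ ∂μ) z₀ :=
      ((hasDerivAt_id z₀).const_sub (a : ℂ)).add (hasDerivAt_cauchyTransform μ hz₀.ne')
    rw [hQ'.deriv]
    intro h
    exact integral_inv_ofReal_sub_mul_ne_one hz₀ hz₀ hQ₀ hQ₀ (by linear_combination h)
end
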